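/- For all natural numbers n and m, the equalities R_i [n]_{i+1} = [n]_i and E_i [n]_{i+1} [m]_{i+1} = [m^n]_i are provable in Λ. -/

import Mathlib

set_option autoImplicit false

/-- Simple types over a set `ν` of atomic types. -/
inductive Ty (ν : Type) : Type
  | atom : ν → Ty ν
  | arrow : Ty ν → Ty ν → Ty ν

/-- A typing context: the (types of the) free variables. -/
abbrev Ctx (ν : Type) : Type := List (Ty ν)

/-- Typed de Bruijn variables. -/
inductive Var {ν : Type} : Ctx ν → Ty ν → Type
  | vz {Γ : Ctx ν} {A : Ty ν} : Var (A :: Γ) A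
  | vs {Γ : Ctx ν} {A B : Ty ν} : Var Γ A → Var (B :: Γ) A

/-- Typed terms of the simply typed lambda calculus Λ. -/
inductive Tm {ν : Type} : Ctx ν → Ty ν → Type
  | var {Γ : Ctx ν} {A : Ty ν} : Var Γ A → Tm Γ A
  | app {Γ : Ctx ν} {A B : Ty ν} : Tm Γ (Ty.arrow A B) → Tm Γ A → Tm Γ B
  | lam {Γ : Ctx ν} {A B : Ty ν} : Tm (A :: Γ) B → Tm Γ (Ty.arrow A B)

/-- Renamings between contexts. -/
def Ren {ν : Type} (Γ Δ : Ctx ν) : Type := ∀ A : Ty ν, Var Γ A → Var Δ A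

def Ren.ext {ν : Type} {Γ Δ : Ctx ν} (ρ : Ren Γ Δ) (A : Ty ν) : Ren (A :: Γ) (A :: Δ) :=
  fun _ v => match v with
  | .vz => .vz
  | .vs w => .vs (ρ _ w)

def Tm.rename {ν : Type} : ∀ {Γ Δ : Ctx ν} {A : Ty ν}, Ren Γ Δ → Tm Γ A → Tm Δ A
  | _, _, _, ρ, .var v => .var (ρ _ v)
  | _, _, _, ρ, .app f a => .app (f.rename ρ) (a.rename ρ)
  | _, _, _, ρ, .lam b => .lam (b.rename (ρ.ext _))

/-- Simultaneous substitutions. -/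
def Subst {ν : Type} (Γ Δ : Ctx ν) : Type := ∀ A : Ty ν, Var Γ A → Tm Δ A

def Subst.ext {ν : Type} {Γ Δ : Ctx ν} (σ : Subst Γ Δ) (A : Ty ν) :
    ∀ B : Ty ν, Var (A :: Γ) B → Tm (A :: Δ) B
  | _, .vz => .var .vz
  | _, .vs w => (σ _ w).rename (fun _ => Var.vs)

def Tm.subst {ν : Type} : ∀ {Γ Δ : Ctx ν} {A : Ty ν}, Subst Γ Δ → Tm Γ A → Tm Δ A
  | _, _, _, σ, .var v => σ _ v
  | _, _, _, σ, .app f a => .app (f.subst σ) (a.subst σ)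
  | _, _, _, σ, .lam b => .lam (b.subst (Subst.ext σ _))

/-- Extending a substitution with a term for the last variable. -/
def Subst.cons {ν : Type} {Γ Δ : Ctx ν} {A : Ty ν} (b : Tm Δ A) (σ : Subst Γ Δ) :
    ∀ B : Ty ν, Var (A :: Γ) B → Tm Δ B
  | _, .vz => b
  | _, .vs w => σ _ w

/-- Substitution of a single term for the last variable: `a[b/x]`. -/
def Tm.subst1 {ν : Type} {Γ : Ctx ν} {A B : Ty ν} (a : Tm (A :: Γ) B) (b : Tm Γ A) : Tm Γ B :=
  a.subst (Subst.cons b (fun _ v => .var v))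

/-- The theory Λ of βη-equality. -/
inductive Eqv {ν : Type} : ∀ {Γ : Ctx ν} {A : Ty ν}, Tm Γ A → Tm Γ A → Prop
  | refl {Γ : Ctx ν} {A : Ty ν} (a : Tm Γ A) : Eqv a a
  | symm {Γ : Ctx ν} {A : Ty ν} {a b : Tm Γ A} : Eqv a b → Eqv b a
  | trans {Γ : Ctx ν} {A : Ty ν} {a b c : Tm Γ A} : Eqv a b → Eqv b c → Eqv a c
  | congApp {Γ : Ctx ν} {A B : Ty ν} {f g : Tm Γ (Ty.arrow A B)} {a b : Tm Γ A} :
      Eqv f g → Eqv a b → Eqv (.app f a) (.app g b)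
  | congLam {Γ : Ctx ν} {A B : Ty ν} {a b : Tm (A :: Γ) B} :
      Eqv a b → Eqv (.lam a) (.lam b)
  | beta {Γ : Ctx ν} {A B : Ty ν} (a : Tm (A :: Γ) B) (b : Tm Γ A) :
      Eqv (.app (.lam a) b) (a.subst1 b)
  | eta {Γ : Ctx ν} {A B : Ty ν} (a : Tm Γ (Ty.arrow A B)) :
      Eqv (.lam (.app (a.rename (fun _ => Var.vs)) (.var .vz))) a

/-- Substitution of types for the atomic types, on types. -/
def Ty.substA {ν : Type} (σ : ν → Ty ν) : Ty ν → Ty ν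
  | .atom v => σ v
  | .arrow A B => .arrow (A.substA σ) (B.substA σ)

def Var.substA {ν : Type} (σ : ν → Ty ν) :
    ∀ {Γ : Ctx ν} {A : Ty ν}, Var Γ A → Var (Γ.map (Ty.substA σ)) (A.substA σ)
  | _, _, .vz => .vz
  | _, _, .vs v => .vs (v.substA σ)

/-- Substitution of types for the atomic types, on terms: type-instances. -/
def Tm.substA {ν : Type} (σ : ν → Ty ν) :
    ∀ {Γ : Ctx ν} {A : Ty ν}, Tm Γ A → Tm (Γ.map (Ty.substA σ)) (A.substA σ)
  | _, _, .var v => .var (v.substA σ)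
  | _, _, .app f a => .app (f.substA σ) (a.substA σ)
  | _, _, .lam b => .lam (b.substA σ)

/-- `Ty.arrs [A₁, …, Aₘ] B = Aₘ → (… → (A₁ → B))` : the type of `λx₁…xₘ.a`. -/
def Ty.arrs {ν : Type} : Ctx ν → Ty ν → Ty ν
  | [], B => B
  | A :: Γ, B => Ty.arrs Γ (Ty.arrow A B)

/-- λ-abstracting all the free variables of a term. -/
def Tm.lamAll {ν : Type} : ∀ {Γ : Ctx ν} {A : Ty ν}, Tm Γ A → Tm [] (Ty.arrs Γ A)
  | [], _, a => a
  | _ :: Γ, _, a => Tm.lamAll (Γ := Γ) (Tm.lam a)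

/-- `Ty.arrsR [B₁, …, Bₙ] C = B₁ → (… → (Bₙ → C))`. -/
def Ty.arrsR {ν : Type} : List (Ty ν) → Ty ν → Ty ν
  | [], C => C
  | B :: Bs, C => Ty.arrow B (Ty.arrsR Bs C)

/-- A list of terms `h₁ : B₁, …, hₙ : Bₙ` in context `Δ`. -/
inductive HList {ν : Type} (Δ : Ctx ν) : List (Ty ν) → Type
  | nil : HList Δ []
  | cons {B : Ty ν} {Bs : List (Ty ν)} : Tm Δ B → HList Δ Bs → HList Δ (B :: Bs)

/-- Iterated application `t h₁ … hₙ`. -/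
def HList.apps {ν : Type} {Δ : Ctx ν} :
    ∀ {Bs : List (Ty ν)} {C : Ty ν}, HList Δ Bs → Tm Δ (Ty.arrsR Bs C) → Tm Δ C
  | _, _, .nil, t => t
  | _, _, .cons h hs, t => HList.apps hs (t.app h)

/-- Iterated application `t h₁ … hₙ`. -/
def Tm.apps {ν : Type} {Δ : Ctx ν} {Bs : List (Ty ν)} {C : Ty ν}
    (t : Tm Δ (Ty.arrsR Bs C)) (hs : HList Δ Bs) : Tm Δ C :=
  hs.apps t

/-- Weakening of a closed term into an arbitrary context. -/
def Var.elim0 {ν : Type} {A : Ty ν} {C : Sort*} : Var ([] : Ctx ν) A → C :=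
  fun v => nomatch v

def Tm.wk {ν : Type} {Δ : Ctx ν} {A : Ty ν} (t : Tm ([] : Ctx ν) A) : Tm Δ A :=
  t.rename (fun _ v => v.elim0)

/-! Λ built over the single atomic type `p`, represented by `Unit`. -/

/-- `AT 0 = p`, `AT (n+1) = AT n → AT n`. -/
def AT : ℕ → Ty Unit
  | 0 => .atom ()
  | n + 1 => .arrow (AT n) (AT n)

/-- `NT i = (AT i → AT i) → (AT i → AT i)`, the type `N_i` of Church numerals. -/
def NT (i : ℕ) : Ty Unit := .arrow (AT (i + 1)) (AT (i + 1))

/-- `iter f x n = f (f (… (f x)))` (`n` times). -/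
def Tm.iter {Γ : Ctx Unit} {A : Ty Unit} (f : Tm Γ (Ty.arrow A A)) (x : Tm Γ A) : ℕ → Tm Γ A
  | 0 => x
  | n + 1 => f.app (Tm.iter f x n)

/-- The Church numeral `[n]_i : N_i`, i.e. `λ x y. xⁿ(y)`. -/
def church (i n : ℕ) : Tm [] (NT i) :=
  .lam (.lam (Tm.iter (.var (.vs .vz)) (.var .vz) n))

/-- The full type structure over the finite ordinal `P = {0, …, h−1}`:
`P`-types and their `P`-functionals.  `interp h A` is `A^p_P`. -/
def interp (h : ℕ) : Ty Unit → Type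
  | .atom _ => Fin h
  | .arrow A B => interp h A → interp h B

/-- The type substitution replacing the atomic type `p` by `N_i`; `A.substA (subN i)`
is the type `Aⁱ`. -/
def subN (i : ℕ) : Unit → Ty Unit := fun _ => NT i

/-- `iDefines h i A φ t`: the closed term `t : Aⁱ` `i`-defines the `P`-functional
`φ ∈ A` (where `P = {0, …, h−1}`). -/
def iDefines (h i : ℕ) : ∀ A : Ty Unit, interp h A → Tm [] (A.substA (subN i)) → Prop
  | .atom _, n, t => Eqv t (church i n.val)
  | .arrow B C, φ, t => ∀ (ψ : interp h B) (b : Tm [] (B.substA (subN i))),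
      iDefines h i B ψ b → iDefines h i C (φ ψ) (t.app b)

/-- The conditional combinator `C_i = λ x y z u v. x (λw. z u v) (y u v)`,
with `x, y, z : N_i`, `u : A_{i+1}` and `v, w : A_i`. -/
def Cc (i : ℕ) : Tm [] (Ty.arrow (NT i) (Ty.arrow (NT i) (Ty.arrow (NT i) (NT i)))) :=
  .lam (.lam (.lam (.lam (.lam (.app
    (.app (.var (.vs (.vs (.vs (.vs .vz)))))
      (.lam (.app (.app (.var (.vs (.vs (.vs .vz)))) (.var (.vs (.vs .vz)))) (.var (.vs .vz)))))
    (.app (.app (.var (.vs (.vs (.vs .vz)))) (.var (.vs .vz))) (.var .vz)))))))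

/-- The type-lowering combinator `R_i = λ x y. x (λ z u. y (z u)) (λ v. v)`,
with `x : N_{i+1}`, `y, z : A_{i+1}` and `u, v : A_i`. -/
def Rc (i : ℕ) : Tm [] (Ty.arrow (NT (i + 1)) (NT i)) :=
  .lam (.lam (.app
    (.app (.var (.vs .vz))
      (.lam (.lam (.app (.var (.vs (.vs .vz))) (.app (.var (.vs .vz)) (.var .vz))))))
    (.lam (.var .vz))))

/-- The exponentiation combinator `E_i = λ x y. x (R_i y)`, with `x, y : N_{i+1}`. -/
def Ec (i : ℕ) : Tm [] (Ty.arrow (NT (i + 1)) (Ty.arrow (NT (i + 1)) (NT i))) :=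
  .lam (.lam (.app (.var (.vs .vz)) (.app (Rc i).wk (.var .vz))))

/-- The addition combinator `S_i = λ x y z u. x z (y z u)`,
with `x, y : N_i`, `z : A_{i+1}` and `u : A_i`. -/
def Sc (i : ℕ) : Tm [] (Ty.arrow (NT i) (Ty.arrow (NT i) (NT i))) :=
  .lam (.lam (.lam (.lam
    (.app (.app (.var (.vs (.vs (.vs .vz)))) (.var (.vs .vz)))
      (.app (.app (.var (.vs (.vs .vz))) (.var (.vs .vz))) (.var .vz))))))

/-- The pairing combinator `Π_i = λ x y z. C_i z x y`, with `x, y, z : N_i`. -/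
def Pairc (i : ℕ) : Tm [] (Ty.arrow (NT i) (Ty.arrow (NT i) (Ty.arrow (NT i) (NT i)))) :=
  .lam (.lam (.lam
    (.app (.app (.app (Cc i).wk (.var .vz)) (.var (.vs (.vs .vz)))) (.var (.vs .vz)))))

/-- The first projection combinator `π_i^1 = λ u. u [0]_i`, with `u : N_{i+1}`. -/
def Pr1 (i : ℕ) : Tm [] (Ty.arrow (NT (i + 1)) (NT i)) :=
  .lam (.app (.var .vz) (church i 0).wk)

/-- The second projection combinator `π_i^2 = λ u. u [1]_i`, with `u : N_{i+1}`. -/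
def Pr2 (i : ℕ) : Tm [] (Ty.arrow (NT (i + 1)) (NT i)) :=
  .lam (.app (.var .vz) (church i 1).wk)

/-- The auxiliary combinator `T_i = λ x. Π_i (S_i [1]_i (π_i^1 x)) (π_i^1 x)`,
with `x : N_{i+1}`. -/
def Tc (i : ℕ) : Tm [] (Ty.arrow (NT (i + 1)) (NT (i + 1))) :=
  .lam (.app
    (.app (Pairc i).wk
      (.app (.app (Sc i).wk (church i 1).wk) (.app (Pr1 i).wk (.var .vz))))
    (.app (Pr1 i).wk (.var .vz)))

/-- The auxiliary combinator `H_i = λ y. y T_i (Π_i [0]_i [0]_i)`, with `y : N_{i+3}`. -/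
def Hc (i : ℕ) : Tm [] (Ty.arrow (NT (i + 3)) (NT (i + 1))) :=
  .lam (.app (.app (.var .vz) (Tc i).wk)
    (.app (.app (Pairc i).wk (church i 0).wk) (church i 0).wk))

/-- The predecessor combinator `P_i = λ y. π_i^2 (H_i y)`, with `y : N_{i+3}`. -/
def Pc (i : ℕ) : Tm [] (Ty.arrow (NT (i + 3)) (NT i)) :=
  .lam (.app (Pr2 i).wk (.app (Hc i).wk (.var .vz)))

/-- The type-raising combinator `Z_{i+1} = λ x y z u. x (λ v. y z u) (z u)`,
with `x, y : N_i`, `z : A_{i+1}` and `u, v : A_i`.  (`Zc i` denotes `Z_{i+1}`.) -/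
def Zc (i : ℕ) : Tm [] (Ty.arrow (NT i) (NT (i + 1))) :=
  .lam (.lam (.lam (.lam
    (.app
      (.app (.var (.vs (.vs (.vs .vz))))
        (.lam (.app (.app (.var (.vs (.vs (.vs .vz)))) (.var (.vs (.vs .vz)))) (.var (.vs .vz)))))
      (.app (.var (.vs .vz)) (.var .vz))))))

/-- The equality-test combinators: `D_i^0 = λ x. C_i x [0]_i [1]_i` and, for `k ≥ 1`
and `i ≥ 3k`, `D_i^k = λ x. C_i x [1]_i (Z_i (Z_{i-1} (Z_{i-2} (D_{i-3}^{k-1} (P_{i-3} x)))))`,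
with `x : N_i`.  (For `k ≥ 1` and `i < 3` the value is irrelevant.) -/
def Dc : ℕ → (i : ℕ) → Tm [] (Ty.arrow (NT i) (NT i))
  | 0, i => .lam (.app (.app (.app (Cc i).wk (.var .vz)) (church i 0).wk) (church i 1).wk)
  | k + 1, j + 3 =>
    .lam (.app (.app (.app (Cc (j + 3)).wk (.var .vz)) (church (j + 3) 1).wk)
      (.app (Zc (j + 2)).wk (.app (Zc (j + 1)).wk (.app (Zc j).wk
        (.app (Dc k j).wk (.app (Pc j).wk (.var .vz)))))))
  | _ + 1, _ => .lam (.var .vz)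

section AuxLemmas

theorem rename_congr {ν : Type} {Γ Δ : Ctx ν} {A : Ty ν} (t : Tm Γ A) {ρ ρ' : Ren Γ Δ}
    (h : ∀ B v, ρ B v = ρ' B v) : t.rename ρ = t.rename ρ' :=
  congrArg (fun ρ => Tm.rename ρ t) (funext fun B => funext (h B))

theorem subst_congr {ν : Type} {Γ Δ : Ctx ν} {A : Ty ν} (t : Tm Γ A) {σ σ' : Subst Γ Δ}
    (h : ∀ B v, σ B v = σ' B v) : t.subst σ = t.subst σ' :=
  congrArg (fun σ => Tm.subst σ t) (funext fun B => funext (h B))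

theorem rename_rename {ν : Type} {Γ Δ Θ : Ctx ν} {A : Ty ν} (t : Tm Γ A)
    (ρ : Ren Γ Δ) (ρ' : Ren Δ Θ) :
    (t.rename ρ).rename ρ' = t.rename (fun B v => ρ' B (ρ B v)) := by
  induction t generalizing Δ Θ with
  | var v => rfl
  | app f a ihf iha => simp [Tm.rename, ihf, iha]
  | lam b ih =>
    simp only [Tm.rename]
    rw [ih]
    exact congrArg Tm.lam (rename_congr b (fun B v => by cases v <;> rfl))

theorem rename_subst {ν : Type} {Γ Δ Θ : Ctx ν} {A : Ty ν} (t : Tm Γ A)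
    (ρ : Ren Γ Δ) (σ : Subst Δ Θ) :
    (t.rename ρ).subst σ = t.subst (fun B v => σ B (ρ B v)) := by
  induction t generalizing Δ Θ with
  | var v => rfl
  | app f a ihf iha => simp [Tm.rename, Tm.subst, ihf, iha]
  | lam b ih =>
    simp only [Tm.rename, Tm.subst]
    rw [ih (Ren.ext ρ _) (Subst.ext σ _)]
    exact congrArg Tm.lam (subst_congr b (fun B v => by cases v <;> rfl))

theorem subst_rename {ν : Type} {Γ Δ Θ : Ctx ν} {A : Ty ν} (t : Tm Γ A)
    (σ : Subst Γ Δ) (ρ : Ren Δ Θ) :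
    (t.subst σ).rename ρ = t.subst (fun B v => (σ B v).rename ρ) := by
  induction t generalizing Δ Θ with
  | var v => rfl
  | app f a ihf iha => simp [Tm.rename, Tm.subst, ihf, iha]
  | lam b ih =>
    simp only [Tm.rename, Tm.subst]
    rw [ih (Subst.ext σ _) (Ren.ext ρ _)]
    refine congrArg Tm.lam (subst_congr b (fun B v => ?_))
    cases v with
    | vz => rfl
    | vs w =>
      show ((σ _ w).rename _).rename _ = ((σ _ w).rename _).rename _
      rw [rename_rename (ρ := fun _ => Var.vs) (ρ' := Ren.ext ρ _), rename_rename (ρ := ρ) (ρ' := fun _ => Var.vs)]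
      exact rename_congr _ (fun B v => rfl)

theorem subst_eq_rename {ν : Type} {Γ Δ : Ctx ν} {A : Ty ν} (t : Tm Γ A)
    (σ : Subst Γ Δ) (ρ : Ren Γ Δ) (h : ∀ B v, σ B v = .var (ρ B v)) :
    t.subst σ = t.rename ρ := by
  induction t generalizing Δ with
  | var v => exact h _ v
  | app f a ihf iha => simp [Tm.subst, Tm.rename, ihf _ _ h, iha _ _ h]
  | lam b ih =>
    simp only [Tm.subst, Tm.rename]
    rw [ih (Subst.ext σ _) (Ren.ext ρ _)]
    intro B v
    cases v with
    | vz => rfl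
    | vs w => show (σ _ w).rename _ = _; rw [h _ w]; rfl

theorem rename_id {ν : Type} {Γ : Ctx ν} {A : Ty ν} (t : Tm Γ A) :
    t.rename (fun _ v => v) = t := by
  induction t with
  | var v => rfl
  | app f a ihf iha => simp [Tm.rename, ihf, iha]
  | lam b ih =>
    show Tm.lam (b.rename _) = _
    rw [rename_congr b (ρ' := fun _ v => v) (fun B v => by cases v <;> rfl), ih]

@[simp] theorem subst_var {ν : Type} {Γ : Ctx ν} {A : Ty ν} (t : Tm Γ A) :
    t.subst (fun _ v => .var v) = t := by
  rw [subst_eq_rename t _ (fun _ v => v) (fun B v => rfl), rename_id]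

@[simp] theorem subst_cons_wk {ν : Type} {Γ Δ : Ctx ν} {A B : Ty ν}
    (t : Tm Γ A) (b : Tm Δ B) (σ : Subst Γ Δ) :
    (t.rename (fun _ => Var.vs)).subst (Subst.cons b σ) = t.subst σ := by
  rw [rename_subst (ρ := fun _ => Var.vs) (σ := Subst.cons b σ)]
  exact subst_congr t (fun B v => rfl)

@[simp] theorem subst_ext_wk {ν : Type} {Γ Δ : Ctx ν} {A B : Ty ν}
    (t : Tm Γ A) (σ : Subst Γ Δ) :
    (t.rename (fun _ => Var.vs)).subst (Subst.ext σ B)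
      = (t.subst σ).rename (fun _ => Var.vs) := by
  rw [rename_subst (ρ := fun _ => Var.vs) (σ := Subst.ext σ B), subst_rename (σ := σ) (ρ := fun _ => Var.vs)]
  exact subst_congr t (fun B v => rfl)

@[simp] theorem rename_ext_wk {ν : Type} {Γ Δ : Ctx ν} {A B : Ty ν}
    (t : Tm Γ A) (ρ : Ren Γ Δ) :
    (t.rename (fun _ => Var.vs)).rename (Ren.ext ρ B)
      = (t.rename ρ).rename (fun _ => Var.vs) := by
  rw [rename_rename (ρ := fun _ => Var.vs) (ρ' := Ren.ext ρ B), rename_rename (ρ := ρ) (ρ' := fun _ => Var.vs)]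
  exact rename_congr t (fun B v => rfl)

@[simp] theorem iter_rename {Γ Δ : Ctx Unit} {A : Ty Unit} (ρ : Ren Γ Δ)
    (f : Tm Γ (.arrow A A)) (x : Tm Γ A) (n : ℕ) :
    (Tm.iter f x n).rename ρ = Tm.iter (f.rename ρ) (x.rename ρ) n := by
  induction n with
  | zero => rfl
  | succ n ih => simp [Tm.iter, Tm.rename, ih]

@[simp] theorem iter_subst {Γ Δ : Ctx Unit} {A : Ty Unit} (σ : Subst Γ Δ)
    (f : Tm Γ (.arrow A A)) (x : Tm Γ A) (n : ℕ) :
    (Tm.iter f x n).subst σ = Tm.iter (f.subst σ) (x.subst σ) n := by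
  induction n with
  | zero => rfl
  | succ n ih => simp [Tm.iter, Tm.subst, ih]

theorem iter_add {Γ : Ctx Unit} {A : Ty Unit} (f : Tm Γ (.arrow A A)) (x : Tm Γ A) (k j : ℕ) :
    Tm.iter f (Tm.iter f x j) k = Tm.iter f x (k + j) := by
  induction k with
  | zero => simp [Tm.iter]
  | succ k ih =>
    rw [show k + 1 + j = (k + j) + 1 by omega]
    simp [Tm.iter, ih]

/-- Church numeral in an arbitrary context. -/
def churchC (i n : ℕ) {Γ : Ctx Unit} : Tm Γ (NT i) :=
  .lam (.lam (Tm.iter (.var (.vs .vz)) (.var .vz) n))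

theorem church_def (i n : ℕ) : church i n = churchC i n := rfl

@[simp] theorem churchC_rename {Γ Δ : Ctx Unit} (i n : ℕ) (ρ : Ren Γ Δ) :
    (churchC i n).rename ρ = churchC i n := by
  simp only [churchC, Tm.rename, iter_rename (ρ := Ren.ext (Ren.ext ρ _) _)]
  rfl

@[simp] theorem churchC_subst {Γ Δ : Ctx Unit} (i n : ℕ) (σ : Subst Γ Δ) :
    (churchC i n).subst σ = churchC i n := by
  simp only [churchC, Tm.subst, iter_subst (σ := Subst.ext (Subst.ext σ _) _)]
  rfl

theorem church_rename {Δ : Ctx Unit} (i n : ℕ) (ρ : Ren [] Δ) :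
    (church i n).rename ρ = churchC i n := by
  rw [church_def, churchC_rename]

theorem churchC_app {Δ : Ctx Unit} (j m : ℕ) (g : Tm Δ (AT (j + 1))) :
    Eqv ((churchC j m).app g)
      (.lam (Tm.iter (g.rename (fun _ => Var.vs)) (.var .vz) m)) := by
  have h := Eqv.beta (Tm.lam (Tm.iter (.var (.vs .vz)) (.var .vz) m)) g
  have e : (Tm.lam (Tm.iter (.var (.vs (.vz (Γ := Δ) (A := AT (j+1))))) (.var .vz) m)).subst1 g
      = .lam (Tm.iter (g.rename (fun _ => Var.vs)) (.var .vz) m) := by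
    simp only [Tm.subst1, Tm.subst, iter_subst (σ := Subst.ext (Subst.cons g (fun _ v => .var v)) _)]
    rfl
  exact e ▸ h

theorem churchC_app2 {Δ : Ctx Unit} (j m : ℕ) (g : Tm Δ (AT (j + 1))) (t : Tm Δ (AT j)) :
    Eqv (((churchC j m).app g).app t) (Tm.iter g t m) := by
  refine ((churchC_app j m g).congApp (Eqv.refl t)).trans ?_
  have h := Eqv.beta (Tm.iter (g.rename (fun _ => Var.vs)) (.var .vz) m) t
  have e : (Tm.iter (g.rename (fun _ => Var.vs)) (.var .vz) m).subst1 t = Tm.iter g t m := by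
    simp only [Tm.subst1, iter_subst (σ := Subst.cons t (fun _ v => .var v))]
    exact congrArg (fun g' => Tm.iter g' t m) ((subst_cons_wk g t _).trans (subst_var g))
  exact e ▸ h

theorem rename_lam_iter {Γ : Ctx Unit} {A B : Ty Unit}
    (w : Tm Γ (Ty.arrow A A)) (k : ℕ) :
    (Tm.lam (Tm.iter (w.rename (fun _ => Var.vs)) (.var (.vz (A := A)))
        k)).rename (fun _ => Var.vs (B := B))
      = .lam (Tm.iter ((w.rename (fun _ => Var.vs)).rename (fun _ => Var.vs)) (.var .vz) k) := by
  simp only [Tm.rename, iter_rename (ρ := Ren.ext (fun _ => Var.vs) A), rename_ext_wk (ρ := fun _ => Var.vs)]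
  rfl

/-- `G^m(t) = w^{k·m}(t)` where `G = λu. w^k(u)`. -/
theorem iter_iter {Δ : Ctx Unit} {A : Ty Unit} (w : Tm Δ (.arrow A A)) (t : Tm Δ A) (k m : ℕ) :
    Eqv (Tm.iter (.lam (Tm.iter (w.rename (fun _ => Var.vs)) (.var .vz) k)) t m)
        (Tm.iter w t (k * m)) := by
  induction m with
  | zero => exact Eqv.refl _
  | succ m ih =>
    have h1 : Eqv (Tm.iter (.lam (Tm.iter (w.rename (fun _ => Var.vs)) (.var .vz) k)) t (m + 1))
        ((Tm.lam (Tm.iter (w.rename (fun _ => Var.vs)) (.var .vz) k)).app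
          (Tm.iter w t (k * m))) :=
      Eqv.congApp (Eqv.refl _) ih
    have h2 := Eqv.beta (Tm.iter (w.rename (fun _ => Var.vs)) (.var .vz) k)
      (Tm.iter w t (k * m))
    have e : (Tm.iter (w.rename (fun _ => Var.vs)) (.var .vz) k).subst1 (Tm.iter w t (k * m))
        = Tm.iter w t (k * (m + 1)) := by
      simp only [Tm.subst1, iter_subst (σ := Subst.cons (Tm.iter w t (k * m)) (fun _ v => .var v))]
      refine (congrArg (fun g' => Tm.iter g' (Tm.iter w t (k * m)) k) ((subst_cons_wk w _ _).trans (subst_var w))).trans ?_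
      show Tm.iter w (Tm.iter w t (k * m)) k = _
      rw [iter_add, show k + k * m = k * (m + 1) by ring]
    exact h1.trans (e ▸ h2)

/-- `F^n(I) = λu. y^n(u)` where `F = λz u. y (z u)` and `I = λv. v`. -/
theorem iterF {Δ : Ctx Unit} {i : ℕ} (y : Tm Δ (AT (i + 1))) (n : ℕ) :
    Eqv (Tm.iter
          (.lam (.lam (.app ((y.rename (fun _ => Var.vs)).rename (fun _ => Var.vs))
            (.app (.var (.vs .vz)) (.var .vz)))))
          (.lam (.var .vz)) n)
        (.lam (Tm.iter (y.rename (fun _ => Var.vs)) (.var .vz) n)) := by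
  induction n with
  | zero => exact Eqv.refl _
  | succ n ih =>
    refine (Eqv.congApp (Eqv.refl _) ih).trans ?_
    have h2 := Eqv.beta
      (Tm.lam (.app ((y.rename (fun _ => Var.vs)).rename (fun _ => Var.vs))
        (.app (.var (.vs .vz)) (.var .vz))))
      (Tm.lam (Tm.iter (y.rename (fun _ => Var.vs)) (.var .vz) n))
    have e : (Tm.lam (.app ((y.rename (fun _ => Var.vs (B := AT (i+1)))).rename
              (fun _ => Var.vs (B := AT i)))
            (.app (.var (.vs .vz)) (.var .vz)))).subst1
          (Tm.lam (Tm.iter (y.rename (fun _ => Var.vs)) (.var .vz) n))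
        = .lam (.app (y.rename (fun _ => Var.vs))
            (.app ((Tm.lam (Tm.iter (y.rename (fun _ => Var.vs)) (.var .vz) n)).rename
              (fun _ => Var.vs)) (.var .vz))) := by
      simp only [Tm.subst1, Tm.subst]
      refine congrArg Tm.lam (congrArg₂ Tm.app ?_ rfl)
      exact (subst_ext_wk _ _).trans (congrArg (Tm.rename _) ((subst_cons_wk y _ _).trans (subst_var y)))
    refine (e ▸ h2).trans ?_
    refine (congrArg (fun u => Eqv (Tm.lam (Tm.app (y.rename (fun _ => Var.vs)) (Tm.app u (.var .vz)))) _) (rename_lam_iter (B := AT i) y n)).mpr ?_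
    refine Eqv.congLam (Eqv.congApp (Eqv.refl _) ?_)
    have h3 := Eqv.beta (Tm.iter ((y.rename (fun _ => Var.vs)).rename (fun _ => Var.vs))
      (.var .vz) n) (.var .vz)
    have e3 : (Tm.iter ((y.rename (fun _ => Var.vs)).rename (fun _ => Var.vs))
          (.var .vz) n).subst1 (.var (.vz (Γ := Δ) (A := AT i)))
        = Tm.iter (y.rename (fun _ => Var.vs)) (.var .vz) n := by
      simp only [Tm.subst1, iter_subst (σ := Subst.cons (.var .vz) (fun _ v => .var v))]
      exact congrArg (fun g' => Tm.iter g' (.var .vz) n) ((subst_cons_wk _ _ _).trans (subst_var _))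
    exact e3 ▸ h3

/-- `[m]^n(y) = λu. y^{mⁿ}(u)`. -/
theorem iter_church {Δ : Ctx Unit} (i : ℕ) (y : Tm Δ (AT (i + 1))) (n m : ℕ) :
    Eqv (Tm.iter (churchC i m) y n)
        (.lam (Tm.iter (y.rename (fun _ => Var.vs)) (.var .vz) (m ^ n))) := by
  induction n with
  | zero =>
    rw [pow_zero]
    exact (Eqv.eta y).symm
  | succ n ih =>
    refine (Eqv.congApp (Eqv.refl (churchC i m)) ih).trans ?_
    refine (churchC_app i m _).trans ?_
    refine (congrArg (fun u => Eqv (Tm.lam (Tm.iter u (.var .vz) m)) _) (rename_lam_iter (B := AT i) y (m ^ n))).mpr ?_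
    refine (Eqv.congLam (iter_iter (y.rename (fun _ => Var.vs)) (.var .vz) (m ^ n) m)).trans ?_
    rw [show m ^ n * m = m ^ (n + 1) by rw [pow_succ]]
    exact Eqv.refl _

theorem R_correct (i n : ℕ) : Eqv ((Rc i).app (church (i + 1) n)) (church i n) := by
  have h0 := Eqv.beta
    (Tm.lam (.app
      (.app (.var (.vs .vz))
        (.lam (.lam (.app (.var (.vs (.vs .vz))) (.app (.var (.vs .vz)) (.var .vz))))))
      (.lam (.var .vz))))
    (church (i + 1) n)
  have e : (Tm.lam (.app
      (.app (.var (.vs (.vz (Γ := []) (A := NT (i+1)))))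
        (.lam (.lam (.app (.var (.vs (.vs .vz))) (.app (.var (.vs .vz)) (.var .vz))))))
      (.lam (.var .vz)))).subst1 (church (i + 1) n)
      = .lam (.app (.app ((church (i + 1) n).rename (fun _ => Var.vs))
          (.lam (.lam (.app (.var (.vs (.vs .vz))) (.app (.var (.vs .vz)) (.var .vz))))))
        (.lam (.var .vz))) := rfl
  refine (e ▸ h0).trans ?_
  refine (congrArg (fun u => Eqv (Tm.lam (Tm.app (Tm.app u _) _)) _) (church_rename (i + 1) n (fun _ => Var.vs))).mpr ?_
  refine Eqv.congLam ?_
  refine (churchC_app2 (i + 1) n _ _).trans ?_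
  exact iterF (i := i) (Δ := [AT (i + 1)]) (Tm.var .vz) n

theorem E_correct (i n m : ℕ) :
    Eqv (((Ec i).app (church (i + 1) n)).app (church (i + 1) m)) (church i (m ^ n)) := by
  have h0 := Eqv.beta
    (Tm.lam (.app (.var (.vs .vz)) (.app ((Rc i).wk) (.var .vz))))
    (church (i + 1) n)
  have e0 : (Tm.lam (.app (.var (.vs (.vz (Γ := []) (A := NT (i+1)))))
        (.app ((Rc i).wk) (.var .vz)))).subst1 (church (i + 1) n)
      = .lam (.app ((church (i + 1) n).rename (fun _ => Var.vs))
          (.app ((Rc i).wk) (.var .vz))) := rfl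
  have h1 : Eqv (((Ec i).app (church (i + 1) n)).app (church (i + 1) m))
      ((Tm.lam (.app ((church (i + 1) n).rename (fun _ => Var.vs))
          (.app ((Rc i).wk) (.var .vz)))).app (church (i + 1) m)) :=
    Eqv.congApp (e0 ▸ h0) (Eqv.refl _)
  replace h1 := (congrArg (fun u => Eqv (((Ec i).app (church (i + 1) n)).app (church (i + 1) m)) ((Tm.lam (.app u (.app ((Rc i).wk) (.var .vz)))).app (church (i + 1) m))) (church_rename (i + 1) n (fun _ => Var.vs))).mp h1
  have h2 := Eqv.beta (Tm.app (churchC (i + 1) n) (.app ((Rc i).wk) (.var .vz)))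
    (church (i + 1) m)
  have e2 : (Tm.app (churchC (i + 1) n)
        (.app ((Rc i).wk) (.var (.vz (Γ := []) (A := NT (i+1)))))).subst1 (church (i + 1) m)
      = .app (churchC (i + 1) n) (.app (Rc i) (church (i + 1) m)) := by
    simp only [Tm.subst1, Tm.subst, churchC, iter_subst (σ := Subst.ext (Subst.ext (Subst.cons (church (i + 1) m) (fun _ v => .var v)) _) _)]
    rfl
  refine (h1.trans (e2 ▸ h2)).trans ?_
  refine (Eqv.congApp (Eqv.refl (churchC (i + 1) n)) (R_correct i m)).trans ?_
  refine (churchC_app (i + 1) n (church i m)).trans ?_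
  refine (congrArg (fun u => Eqv (Tm.lam (Tm.iter u (.var .vz) n)) _) (church_rename i m (fun _ => Var.vs))).mpr ?_
  exact Eqv.congLam (iter_church i (Tm.var .vz) n m)

end AuxLemmas

/--
For all natural numbers `n` and `m`, the equalities `R_i [n]_{i+1} = [n]_i` and
`E_i [n]_{i+1} [m]_{i+1} = [mⁿ]_i` are provable in Λ.
-/
theorem lowering_and_exponentiation_correct (i n m : ℕ) :
    Eqv ((Rc i).app (church (i + 1) n)) (church i n) ∧
    Eqv (((Ec i).app (church (i + 1) n)).app (church (i + 1) m)) (church i (m ^ n)) := by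
  exact ⟨R_correct i n, E_correct i n m⟩
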